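/- Let U ∈ U(dn) be a unitary on ℂ^d ⊗ ℂ^n and let T : M_d(ℂ) → M_d(ℂ) be the n-noisy operation T(X) = Tr_E(U (X ⊗ (1/n)I_n) U†). Then the Kraus rank of T equals the operator Schmidt rank of U: R(T) = Ω(U). -/

import Mathlib

open Matrix Kronecker BigOperators

/-- Partial trace over the second (environment) tensor factor of `M_d(ℂ) ⊗ M_n(ℂ)`. -/
noncomputable def trE {d n : ℕ} (M : Matrix (Fin d × Fin n) (Fin d × Fin n) ℂ) :
    Matrix (Fin d) (Fin d) ℂ :=
  Matrix.of fun i j => ∑ e : Fin n, M (i, e) (j, e)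

/-- The Choi matrix `Σ_{i,j} E_{ij} ⊗ T(E_{ij})` of a map on `M_d(ℂ)`. -/
noncomputable def choi {d : ℕ}
    (T : Matrix (Fin d) (Fin d) ℂ → Matrix (Fin d) (Fin d) ℂ) :
    Matrix (Fin d × Fin d) (Fin d × Fin d) ℂ :=
  ∑ i : Fin d, ∑ j : Fin d,
    Matrix.single i j (1 : ℂ) ⊗ₖ T (Matrix.single i j (1 : ℂ))

/-- The Kraus rank of a map on `M_d(ℂ)`: the rank of its Choi matrix. -/
noncomputable def krausRank {d : ℕ}
    (T : Matrix (Fin d) (Fin d) ℂ → Matrix (Fin d) (Fin d) ℂ) : ℕ :=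
  (choi T).rank

/-- The operator Schmidt rank of `Y ∈ M_d(ℂ) ⊗ M_n(ℂ)`: the smallest `r` such that
`Y = Σᵢ₌₁ʳ Aᵢ ⊗ Bᵢ` for some `Aᵢ ∈ M_d(ℂ)`, `Bᵢ ∈ M_n(ℂ)`. -/
noncomputable def schmidtRank {d n : ℕ}
    (Y : Matrix (Fin d × Fin n) (Fin d × Fin n) ℂ) : ℕ :=
  sInf {r : ℕ | ∃ (A : Fin r → Matrix (Fin d) (Fin d) ℂ)
    (B : Fin r → Matrix (Fin n) (Fin n) ℂ), Y = ∑ i, A i ⊗ₖ B i}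

/-- The realignment of `Y ∈ M_d(ℂ) ⊗ M_n(ℂ)`. -/
noncomputable def realign {d n : ℕ} (Y : Matrix (Fin d × Fin n) (Fin d × Fin n) ℂ) :
    Matrix (Fin d × Fin d) (Fin n × Fin n) ℂ :=
  Matrix.of fun pa ef => Y (pa.2, ef.1) (pa.1, ef.2)

/-- Rank factorization: any matrix of rank `r` factors through `Fin r`. -/
lemma exists_rank_factorization {m p : Type*} [Fintype m] [Fintype p] (M : Matrix m p ℂ) :
    ∃ (C : Matrix m (Fin M.rank) ℂ) (R : Matrix (Fin M.rank) p ℂ), M = C * R := by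
  classical
  set S := Submodule.span ℂ (Set.range Mᵀ) with hS
  have hrank : M.rank = Module.finrank ℂ S := M.rank_eq_finrank_span_cols
  let b : Module.Basis (Fin (Module.finrank ℂ S)) ℂ S := Module.finBasis ℂ S
  have hmem : ∀ j, Mᵀ j ∈ S := fun j => Submodule.subset_span ⟨j, rfl⟩
  refine ⟨Matrix.of fun i k => (b (Fin.cast hrank k) : m → ℂ) i,
          Matrix.of fun k j => b.repr ⟨Mᵀ j, hmem j⟩ (Fin.cast hrank k), ?_⟩
  ext i j
  have h := b.sum_repr ⟨Mᵀ j, hmem j⟩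
  have h2 := congrArg (fun x : S => (x : m → ℂ) i) h
  simp only [Submodule.coe_sum, Finset.sum_apply, SetLike.val_smul, Pi.smul_apply,
    smul_eq_mul] at h2
  have hMij : M i j = Mᵀ j i := rfl
  rw [hMij, ← h2, Matrix.mul_apply]
  rw [← Fintype.sum_equiv (finCongr hrank) _ _ (fun k => rfl)]
  simp [mul_comm]

/-- The operator Schmidt rank equals the rank of the realignment. -/
lemma schmidtRank_eq_rank_realign {d n : ℕ} (Y : Matrix (Fin d × Fin n) (Fin d × Fin n) ℂ) :
    schmidtRank Y = (realign Y).rank := by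
  have hmem : (realign Y).rank ∈ {r : ℕ | ∃ (A : Fin r → Matrix (Fin d) (Fin d) ℂ)
      (B : Fin r → Matrix (Fin n) (Fin n) ℂ), Y = ∑ i, A i ⊗ₖ B i} := by
    obtain ⟨C, R, hCR⟩ := exists_rank_factorization (realign Y)
    refine ⟨fun i => Matrix.of fun a p => C (p, a) i,
            fun i => Matrix.of fun e f => R i (e, f), ?_⟩
    ext ⟨a, e⟩ ⟨p, f⟩
    have h := congrFun (congrFun hCR (p, a)) (e, f)
    simp only [realign, Matrix.of_apply, Matrix.mul_apply] at h
    simp [Matrix.sum_apply, Matrix.kroneckerMap_apply, h]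
    rfl
  refine le_antisymm (Nat.sInf_le hmem) (le_csInf ⟨_, hmem⟩ ?_)
  rintro r ⟨A, B, rfl⟩
  have hfac : realign (∑ i, A i ⊗ₖ B i)
      = (Matrix.of fun (pa : Fin d × Fin d) i => A i pa.2 pa.1)
        * (Matrix.of fun i (ef : Fin n × Fin n) => B i ef.1 ef.2) := by
    ext ⟨p, a⟩ ⟨e, f⟩
    simp [realign, Matrix.mul_apply, Matrix.sum_apply, Matrix.kroneckerMap_apply]
  calc (realign (∑ i, A i ⊗ₖ B i)).rank ≤ _ := by
        rw [hfac]; exact (Matrix.rank_mul_le_left _ _).trans (Matrix.rank_le_card_width _)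
    _ = r := Fintype.card_fin r

lemma choi_apply {d : ℕ} (T : Matrix (Fin d) (Fin d) ℂ → Matrix (Fin d) (Fin d) ℂ)
    (p q a b : Fin d) :
    choi T (p, a) (q, b) = T (Matrix.single p q (1 : ℂ)) a b := by
  simp only [choi, Matrix.sum_apply, Matrix.kroneckerMap_apply]
  rw [Finset.sum_eq_single p, Finset.sum_eq_single q]
  · simp
  · intro j _ hj; simp [Matrix.single, hj]
  · simp
  · intro i _ hi
    exact Finset.sum_eq_zero fun j _ => by simp [Matrix.single, hi]
  · simp

lemma kron_std_apply {d n : ℕ} (c : ℂ) (p q x z : Fin d) (y w : Fin n) :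
    (Matrix.single p q (1 : ℂ) ⊗ₖ (c • (1 : Matrix (Fin n) (Fin n) ℂ))) (x, y) (z, w)
      = if p = x ∧ q = z ∧ y = w then c else 0 := by
  simp only [Matrix.kroneckerMap_apply, Matrix.smul_apply, Matrix.one_apply,
    Matrix.single, Matrix.of_apply, smul_eq_mul]
  by_cases hx : p = x <;> by_cases hz : q = z <;> by_cases hy : y = w <;>
    simp [hx, hz, hy]

lemma mulM_apply {d n : ℕ} (U : Matrix (Fin d × Fin n) (Fin d × Fin n) ℂ) (c : ℂ)
    (p q : Fin d) (ae : Fin d × Fin n) (z : Fin d) (w : Fin n) :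
    (U * (Matrix.single p q (1 : ℂ) ⊗ₖ (c • (1 : Matrix (Fin n) (Fin n) ℂ)))) ae (z, w)
      = if q = z then c * U ae (p, w) else 0 := by
  rw [Matrix.mul_apply, Fintype.sum_prod_type]
  rw [Finset.sum_eq_single p]
  · rw [Finset.sum_eq_single w]
    · rw [kron_std_apply]
      by_cases hz : q = z <;> simp [hz, mul_comm]
    · intro y _ hy; rw [kron_std_apply]; simp [hy]
    · simp
  · intro x _ hx
    exact Finset.sum_eq_zero fun y _ => by rw [kron_std_apply]; simp [Ne.symm hx]
  · simp

/-- The Choi matrix of the `n`-noisy map is `n⁻¹ • (realign U * (realign U)ᴴ)`. -/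
lemma choi_noisy {d n : ℕ} (U : Matrix (Fin d × Fin n) (Fin d × Fin n) ℂ) :
    choi (fun X => trE (U * (X ⊗ₖ ((n : ℂ)⁻¹ • (1 : Matrix (Fin n) (Fin n) ℂ))) * Uᴴ))
      = (n : ℂ)⁻¹ • (realign U * (realign U)ᴴ) := by
  ext ⟨p, a⟩ ⟨q, b⟩
  rw [choi_apply]
  simp only [trE, Matrix.of_apply]
  have key : ∀ e : Fin n,
      (U * (Matrix.single p q (1 : ℂ) ⊗ₖ
          ((n : ℂ)⁻¹ • (1 : Matrix (Fin n) (Fin n) ℂ))) * Uᴴ) (a, e) (b, e)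
      = (n : ℂ)⁻¹ * ∑ w : Fin n, U (a, e) (p, w) * star (U (b, e) (q, w)) := by
    intro e
    rw [Matrix.mul_apply]
    simp only [Matrix.conjTranspose_apply]
    rw [Fintype.sum_prod_type, Finset.sum_eq_single q]
    · rw [Finset.mul_sum]
      refine Finset.sum_congr rfl fun w _ => ?_
      rw [mulM_apply]; simp [mul_assoc]
    · intro z _ hz
      exact Finset.sum_eq_zero fun w _ => by rw [mulM_apply]; simp [Ne.symm hz]
    · simp
  simp only [key]
  rw [← Finset.mul_sum]
  simp only [Matrix.smul_apply, Matrix.mul_apply, Matrix.conjTranspose_apply, realign,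
    Matrix.of_apply, smul_eq_mul, Fintype.sum_prod_type]

lemma rank_smul_le {m p : Type*} [Fintype m] [Fintype p] [DecidableEq m]
    (c : ℂ) (A : Matrix m p ℂ) : (c • A).rank ≤ A.rank := by
  have h : c • A = (c • (1 : Matrix m m ℂ)) * A := by
    rw [Matrix.smul_mul, Matrix.one_mul]
  rw [h]
  exact Matrix.rank_mul_le_right _ _

lemma rank_smul_eq {m p : Type*} [Fintype m] [Fintype p] [DecidableEq m]
    {c : ℂ} (hc : c ≠ 0) (A : Matrix m p ℂ) : (c • A).rank = A.rank := by
  refine le_antisymm (rank_smul_le c A) ?_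
  have h : A = c⁻¹ • (c • A) := by rw [smul_smul, inv_mul_cancel₀ hc, one_smul]
  calc A.rank = (c⁻¹ • (c • A)).rank := by rw [← h]
    _ ≤ (c • A).rank := rank_smul_le _ _

/-- Lemma 5 of the paper, from Musz et al.: for a unitary `U` on
`ℂ^d ⊗ ℂ^n`, the Kraus rank of the `n`-noisy operation
`T(X) = Tr_E(U (X ⊗ (1/n)·I_n) U†)` equals the operator Schmidt rank of `U`. -/
theorem krausRank_noisy_eq_schmidtRank
    (d n : ℕ)
    (U : Matrix (Fin d × Fin n) (Fin d × Fin n) ℂ)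
    (hU : U ∈ Matrix.unitaryGroup (Fin d × Fin n) ℂ) :
    krausRank (fun X : Matrix (Fin d) (Fin d) ℂ =>
        trE (U * (X ⊗ₖ ((n : ℂ)⁻¹ • (1 : Matrix (Fin n) (Fin n) ℂ))) * Uᴴ)) =
      schmidtRank U := by
  rw [krausRank, choi_noisy, schmidtRank_eq_rank_realign]
  rcases Nat.eq_zero_or_pos n with hn | hn
  · subst hn
    have h1 : ((0 : ℕ) : ℂ)⁻¹ = 0 := by norm_num
    rw [h1, zero_smul, Matrix.rank_zero]
    have h2 := Matrix.rank_le_card_width (realign U)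
    simp only [Fintype.card_prod, Fintype.card_fin, Nat.mul_zero] at h2
    omega
  · have hc : ((n : ℂ))⁻¹ ≠ 0 := inv_ne_zero (Nat.cast_ne_zero.mpr hn.ne')
    rw [rank_smul_eq hc]
    open scoped ComplexOrder in
    exact Matrix.rank_self_mul_conjTranspose (realign U)
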